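/- Fix real numbers α > 0 and ε with 0 < ε < α, and let Σ be a finite nonempty alphabet. Let n be a positive integer with n > 1/ε and n > 1/(α−ε). If P ⊆ (Fin n → Σ) contains some element S, and there exists U : Fin n → Σ with d(U,P) ≥ α, then every adaptive randomized q-query algorithm that is an ε-test for P satisfies q ≥ α/(6ε). -/

import Mathlib

open scoped Classical

/-- A deterministic adaptive `q`-query strategy over inputs `Fin n → Γ`. -/
structure Strategy (Γ : Type*) (n q : ℕ) where
  query : (i : Fin q) → (Fin i → Γ) → Fin n
  decide : (Fin q → Γ) → Bool

/-- The answers obtained by running a strategy on input `X`. -/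
noncomputable def Strategy.answers {Γ : Type*} {n q : ℕ}
    (S : Strategy Γ n q) (X : Fin n → Γ) (i : Fin q) : Γ :=
  X (S.query i (fun j => Strategy.answers S X ⟨j.val, j.isLt.trans i.isLt⟩))
termination_by i.val

/-- A strategy accepts `X` iff its decision on the answers is `true`. -/
def Strategy.accepts {Γ : Type*} {n q : ℕ} (S : Strategy Γ n q) (X : Fin n → Γ) : Prop :=
  S.decide (S.answers X) = true

/-- Acceptance probability of an adaptive randomized algorithm (a PMF over strategies). -/
noncomputable def acceptProb {Γ : Type*} {n q : ℕ}
    (μ : PMF (Strategy Γ n q)) (X : Fin n → Γ) : ℝ :=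
  (∑' S : Strategy Γ n q, if S.accepts X then μ S else 0).toReal

/-- Normalized Hamming distance. -/
noncomputable def hdist {Γ : Type*} {n : ℕ} (X Y : Fin n → Γ) : ℝ :=
  (Finset.univ.filter fun j => X j ≠ Y j).card / n

/-- Distance from an input to a property. -/
noncomputable def distSet {Γ : Type*} {n : ℕ} (X : Fin n → Γ) (P : Set (Fin n → Γ)) : ℝ :=
  sInf ((fun Y => hdist X Y) '' P)

/-- `μ` is an `ε`-test for `P`. -/
def IsTest {Γ : Type*} {n q : ℕ} (μ : PMF (Strategy Γ n q))
    (P : Set (Fin n → Γ)) (ε : ℝ) : Prop :=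
  (∀ X ∈ P, 2/3 ≤ acceptProb μ X) ∧
  (∀ X : Fin n → Γ, ε ≤ distSet X P → acceptProb μ X ≤ 1/3)

/-- The set of indices where `U` and `V` differ. -/
noncomputable def diffSet {Γ : Type*} {n : ℕ} (U V : Fin n → Γ) : Finset (Fin n) :=
  Finset.univ.filter fun j => U j ≠ V j

/-- `patch U V A` takes the values of `U` on `A` and of `V` elsewhere. -/
def patch {Γ : Type*} {n : ℕ} (U V : Fin n → Γ) (A : Finset (Fin n)) : Fin n → Γ :=
  fun j => if j ∈ A then U j else V j

/-- `μ` is a `(U,V,l)`-distinguisher. -/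
def IsDistinguisher {Γ : Type*} {n q : ℕ} (μ : PMF (Strategy Γ n q))
    (U V : Fin n → Γ) (l : ℕ) : Prop :=
  2/3 ≤ acceptProb μ V ∧
  ∀ A : Finset (Fin n), A ⊆ diffSet U V → A.card = l →
    acceptProb μ (patch U V A) ≤ 1/3

/-- A non-adaptive randomized `q`-query algorithm is a PMF over pairs
(query positions, decision function). -/
abbrev NAStrategy (Γ : Type*) (n q : ℕ) := (Fin q → Fin n) × ((Fin q → Γ) → Bool)

/-- Acceptance probability of a non-adaptive randomized algorithm. -/
noncomputable def naAcceptProb {Γ : Type*} {n q : ℕ}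
    (μ : PMF (NAStrategy Γ n q)) (X : Fin n → Γ) : ℝ :=
  (∑' p : NAStrategy Γ n q, if p.2 (fun i => X (p.1 i)) = true then μ p else 0).toReal

/-- `μ` (non-adaptive) is a `(U,V,l)`-distinguisher. -/
def NAIsDistinguisher {Γ : Type*} {n q : ℕ} (μ : PMF (NAStrategy Γ n q))
    (U V : Fin n → Γ) (l : ℕ) : Prop :=
  2/3 ≤ naAcceptProb μ V ∧
  ∀ A : Finset (Fin n), A ⊆ diffSet U V → A.card = l →
    naAcceptProb μ (patch U V A) ≤ 1/3

/-- Probability that index `j` appears among the query positions of a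
non-adaptive algorithm. -/
noncomputable def queryProb {Γ : Type*} {n q : ℕ}
    (μ : PMF (NAStrategy Γ n q)) (j : Fin n) : ℝ :=
  (∑' p : NAStrategy Γ n q, if ∃ i : Fin q, p.1 i = j then μ p else 0).toReal


/-!
Let `V ∈ P` be a point of `P` closest to `U` and `D` the set of positions where `U` and `V`
differ, so `|D| ≥ αn`. Replacing `V` by `U` on any `l = ⌈εn⌉` positions of `D` gives an input
that is still `(|D| - l)`-close to `U`, hence `ε`-far from `P`; so the test accepts `V` with
probability `≥ 2/3` but each such patch with probability `≤ 1/3`. A strategy behaves identically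
on `V` and on a patch whose positions it never queries on `V`, and the `≤ q` positions it
queries meet at most a fraction `ql/|D|` of the `l`-subsets of `D`. Averaging over these subsets
gives `1/3 ≤ ql/|D|`, i.e. `αn ≤ |D| ≤ 3ql ≤ 6qεn`.
-/

open Finset

namespace Strategy

variable {Γ : Type*} {n q : ℕ}

noncomputable def position (T : Strategy Γ n q) (X : Fin n → Γ) (i : Fin q) : Fin n :=
  T.query i fun j => T.answers X ⟨j, j.isLt.trans i.isLt⟩

lemma answers_apply (T : Strategy Γ n q) (X : Fin n → Γ) (i : Fin q) :
    T.answers X i = X (T.position X i) := by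
  rw [Strategy.answers, position]

lemma answers_eq_of_forall_position {T : Strategy Γ n q} {X Y : Fin n → Γ}
    (h : ∀ i, X (T.position Y i) = Y (T.position Y i)) : T.answers X = T.answers Y := by
  funext i
  induction i using WellFoundedLT.induction with
  | _ i ih =>
    have hprefix : (fun j : Fin i => T.answers X ⟨j, j.isLt.trans i.isLt⟩) =
        fun j : Fin i => T.answers Y ⟨j, j.isLt.trans i.isLt⟩ :=
      funext fun j => ih _ j.isLt
    rw [answers_apply, answers_apply, ← h i, position, position, hprefix]

noncomputable def queried (T : Strategy Γ n q) (X : Fin n → Γ) : Finset (Fin n) :=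
  univ.image (T.position X)

lemma card_queried_le (T : Strategy Γ n q) (X : Fin n → Γ) : (T.queried X).card ≤ q :=
  card_image_le.trans (by simp)

lemma accepts_patch_iff {T : Strategy Γ n q} {U V : Fin n → Γ} {A : Finset (Fin n)}
    (h : Disjoint (T.queried V) A) : T.accepts (patch U V A) ↔ T.accepts V := by
  have hans : T.answers (patch U V A) = T.answers V :=
    answers_eq_of_forall_position fun i =>
      if_neg (disjoint_left.1 h (mem_image_of_mem _ (mem_univ i)))
  rw [Strategy.accepts, Strategy.accepts, hans]

end Strategy

namespace PMF

variable {α : Type*} (μ : PMF α)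

lemma toOuterMeasure_ne_top (s : Set α) : μ.toOuterMeasure s ≠ ⊤ :=
  ne_top_of_le_ne_top ENNReal.one_ne_top <|
    (MeasureTheory.measure_mono (Set.subset_univ s)).trans_eq
      ((toOuterMeasure_apply_eq_one_iff μ _).2 (Set.subset_univ _))

lemma toReal_toOuterMeasure_le_add {s t u : Set α} (h : s ⊆ t ∪ u) :
    (μ.toOuterMeasure s).toReal ≤
      (μ.toOuterMeasure t).toReal + (μ.toOuterMeasure u).toReal := by
  rw [← ENNReal.toReal_add (μ.toOuterMeasure_ne_top t) (μ.toOuterMeasure_ne_top u)]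
  exact ENNReal.toReal_mono
    (ENNReal.add_ne_top.2 ⟨μ.toOuterMeasure_ne_top t, μ.toOuterMeasure_ne_top u⟩)
    ((MeasureTheory.measure_mono h).trans (MeasureTheory.measure_union_le t u))

lemma sum_toReal_toOuterMeasure_le {β : Type*} (𝒜 : Finset β) (p : α → β → Prop)
    [∀ a, DecidablePred (p a)] {c : ℕ}
    (h : ∀ a, (𝒜.filter (p a)).card ≤ c) :
    ∑ A ∈ 𝒜, (μ.toOuterMeasure {a | p a A}).toReal ≤ c := by
  rw [← ENNReal.toReal_sum fun A _ => μ.toOuterMeasure_ne_top _]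
  suffices ∑ A ∈ 𝒜, μ.toOuterMeasure {a | p a A} ≤ c by
    simpa using ENNReal.toReal_mono (ENNReal.natCast_ne_top c) this
  calc ∑ A ∈ 𝒜, μ.toOuterMeasure {a | p a A}
      = ∑' a, ((𝒜.filter (p a)).card : ENNReal) * μ a := by
        simp_rw [toOuterMeasure_apply]
        rw [← Summable.tsum_finsetSum fun _ _ => ENNReal.summable]
        congr 1 with a
        simp [Set.indicator_apply, sum_ite]
    _ ≤ ∑' a, (c : ENNReal) * μ a :=
        ENNReal.tsum_le_tsum fun a => by gcongr; exact_mod_cast h a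
    _ = c := by rw [ENNReal.tsum_mul_left, μ.tsum_coe, mul_one]

end PMF

section Counting

variable {α : Type*} [DecidableEq α]

lemma card_filter_mem_powersetCard_le {D : Finset α} {j : α} (hj : j ∈ D) (l : ℕ) :
    ((D.powersetCard l).filter (j ∈ ·)).card ≤ (D.card - 1).choose (l - 1) := by
  have key : ((D.powersetCard l).filter (j ∈ ·)).card ≤
      ((D.erase j).powersetCard (l - 1)).card := by
    apply card_le_card_of_injOn (·.erase j)
    · intro A hA
      simp only [coe_filter, mem_powersetCard, Set.mem_ofPred_eq, mem_coe] at hA ⊢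
      obtain ⟨⟨hAD, hAl⟩, hjA⟩ := hA
      exact ⟨erase_subset_erase j hAD, by rw [card_erase_of_mem hjA, hAl]⟩
    · intro A hA B hB hAB
      simp only [coe_filter, Set.mem_ofPred_eq] at hA hB
      simpa [insert_erase hA.2, insert_erase hB.2] using congrArg (insert j) hAB
  simpa [card_powersetCard, card_erase_of_mem hj] using key

lemma card_filter_not_disjoint_powersetCard_le (D Q : Finset α) (l : ℕ) :
    ((D.powersetCard l).filter fun A => ¬Disjoint Q A).card ≤
      Q.card * (D.card - 1).choose (l - 1) := by
  have hsub : ((D.powersetCard l).filter fun A => ¬Disjoint Q A) ⊆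
      (Q ∩ D).biUnion fun j => (D.powersetCard l).filter (j ∈ ·) := by
    intro A hA
    obtain ⟨hAl, hQA⟩ := mem_filter.1 hA
    obtain ⟨j, hjQ, hjA⟩ := not_disjoint_iff.1 hQA
    exact mem_biUnion.2 ⟨j, mem_inter.2 ⟨hjQ, (mem_powersetCard.1 hAl).1 hjA⟩,
      mem_filter.2 ⟨hAl, hjA⟩⟩
  calc _ ≤ ∑ j ∈ Q ∩ D, ((D.powersetCard l).filter (j ∈ ·)).card :=
        (card_le_card hsub).trans card_biUnion_le
    _ ≤ ∑ _j ∈ Q ∩ D, (D.card - 1).choose (l - 1) :=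
        sum_le_sum fun j hj => card_filter_mem_powersetCard_le (mem_inter.1 hj).2 l
    _ ≤ Q.card * (D.card - 1).choose (l - 1) := by
        rw [sum_const, smul_eq_mul]
        exact Nat.mul_le_mul_right _ (card_le_card inter_subset_left)

end Counting

section HammingDistance

variable {Γ : Type*} {n : ℕ}

lemma hdist_eq_hammingDist (X Y : Fin n → Γ) : hdist X Y = hammingDist X Y / n := by
  rw [hdist, hammingDist]

lemma hammingDist_eq_card_diffSet (X Y : Fin n → Γ) : hammingDist X Y = (diffSet X Y).card := by
  rw [hammingDist, diffSet]

lemma hammingDist_patch_eq (U V : Fin n → Γ) (A : Finset (Fin n)) :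
    hammingDist U (patch U V A) = (diffSet U V \ A).card := by
  rw [hammingDist]
  congr 1
  ext j
  by_cases hj : j ∈ A <;> simp [patch, diffSet, hj]

lemma distSet_eq_hdist_of_forall_le {P : Set (Fin n → Γ)} {X V : Fin n → Γ} (hV : V ∈ P)
    (hmin : ∀ Y ∈ P, hammingDist X V ≤ hammingDist X Y) : distSet X P = hdist X V := by
  refine IsLeast.csInf_eq ⟨⟨V, hV, rfl⟩, ?_⟩
  rintro _ ⟨Y, hY, rfl⟩
  simp only [hdist_eq_hammingDist]
  gcongr
  exact hmin Y hY

lemma le_distSet {P : Set (Fin n → Γ)} (hP : P.Nonempty) {X : Fin n → Γ} {c : ℝ}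
    (h : ∀ Y ∈ P, c ≤ hdist X Y) : c ≤ distSet X P :=
  le_csInf (hP.image _) (by rintro _ ⟨Y, hY, rfl⟩; exact h Y hY)

lemma card_le_hammingDist_patch {P : Set (Fin n → Γ)} {U V : Fin n → Γ}
    (hmin : ∀ Y ∈ P, hammingDist U V ≤ hammingDist U Y) {A : Finset (Fin n)}
    (hA : A ⊆ diffSet U V) {Y : Fin n → Γ} (hY : Y ∈ P) :
    A.card ≤ hammingDist (patch U V A) Y := by
  have htri := (hmin Y hY).trans (hammingDist_triangle U (patch U V A) Y)
  rw [hammingDist_patch_eq, card_sdiff_of_subset hA, hammingDist_eq_card_diffSet] at htri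
  have := card_le_card hA
  omega

end HammingDistance

section Distinguisher

variable {Γ : Type*} {n q : ℕ}

lemma acceptProb_eq_toReal_toOuterMeasure (μ : PMF (Strategy Γ n q)) (X : Fin n → Γ) :
    acceptProb μ X = (μ.toOuterMeasure {T | T.accepts X}).toReal := by
  rw [acceptProb, PMF.toOuterMeasure_apply]
  rfl

theorem IsDistinguisher.card_diffSet_le {μ : PMF (Strategy Γ n q)} {U V : Fin n → Γ} {l : ℕ}
    (hμ : IsDistinguisher μ U V l) (hl : 0 < l) (hlD : l ≤ (diffSet U V).card) :
    (diffSet U V).card ≤ 3 * q * l := by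
  set D := diffSet U V
  set 𝒜 := D.powersetCard l
  set C := (D.card - 1).choose (l - 1)
  set hit : Finset (Fin n) → ℝ :=
    fun A => (μ.toOuterMeasure {T | ¬Disjoint (T.queried V) A}).toReal
  have hsplit (A : Finset (Fin n)) : acceptProb μ V ≤ acceptProb μ (patch U V A) + hit A := by
    simp only [acceptProb_eq_toReal_toOuterMeasure, hit]
    refine μ.toReal_toOuterMeasure_le_add fun T hT => ?_
    by_cases h : Disjoint (T.queried V) A
    · exact Or.inl ((T.accepts_patch_iff h).2 hT)
    · exact Or.inr h
  have hhit : ∑ A ∈ 𝒜, hit A ≤ (q * C : ℕ) :=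
    μ.sum_toReal_toOuterMeasure_le 𝒜 _ fun T =>
      (card_filter_not_disjoint_powersetCard_le D _ l).trans
        (Nat.mul_le_mul_right _ (T.card_queried_le V))
  have hcount : (𝒜.card : ℝ) * (2 / 3) ≤ 𝒜.card * (1 / 3) + (q * C : ℕ) :=
    calc (𝒜.card : ℝ) * (2 / 3) ≤ ∑ _A ∈ 𝒜, acceptProb μ V := by
          rw [sum_const, nsmul_eq_mul]; gcongr; exact hμ.1
      _ ≤ ∑ A ∈ 𝒜, (acceptProb μ (patch U V A) + hit A) := sum_le_sum fun A _ => hsplit A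
      _ ≤ ∑ _A ∈ 𝒜, (1 / 3 : ℝ) + (q * C : ℕ) := by
          rw [sum_add_distrib]
          gcongr with A hA
          exact hμ.2 A (mem_powersetCard.1 hA).1 (mem_powersetCard.1 hA).2
      _ = 𝒜.card * (1 / 3) + (q * C : ℕ) := by rw [sum_const, nsmul_eq_mul]
  have hN : 𝒜.card ≤ 3 * (q * C) := by
    have : (𝒜.card : ℝ) ≤ (3 * (q * C) : ℕ) := by push_cast at hcount ⊢; linarith
    exact_mod_cast this
  have hDC : D.card * C = l * 𝒜.card := by
    obtain ⟨m, hm⟩ := Nat.exists_eq_add_of_le' (hl.trans_le hlD)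
    obtain ⟨k, rfl⟩ := Nat.exists_eq_add_of_le' hl
    simp only [C, 𝒜, card_powersetCard, hm, Nat.add_sub_cancel]
    rw [Nat.add_one_mul_choose_eq, mul_comm]
  refine Nat.le_of_mul_le_mul_right ?_ (card_pos.2 (powersetCard_nonempty.2 hlD))
  calc D.card * 𝒜.card ≤ D.card * (3 * (q * C)) := Nat.mul_le_mul_left _ hN
    _ = 3 * q * (D.card * C) := by ring
    _ = 3 * q * l * 𝒜.card := by rw [hDC]; ring

lemma IsTest.isDistinguisher {μ : PMF (Strategy Γ n q)} {P : Set (Fin n → Γ)} {ε : ℝ}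
    (hμ : IsTest μ P ε) {U V : Fin n → Γ} (hV : V ∈ P)
    (hmin : ∀ Y ∈ P, hammingDist U V ≤ hammingDist U Y) {l : ℕ} (hl : ε ≤ l / n) :
    IsDistinguisher μ U V l := by
  refine ⟨hμ.1 V hV, fun A hA hAl => hμ.2 _ (le_distSet ⟨V, hV⟩ fun Y hY => ?_)⟩
  rw [hdist_eq_hammingDist]
  refine hl.trans (div_le_div_of_nonneg_right ?_ n.cast_nonneg)
  exact_mod_cast hAl ▸ card_le_hammingDist_patch hmin hA hY

end Distinguisher

theorem test_lower_bound_straightforward_general {Γ : Type*}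
    (α ε : ℝ) (hε : 0 < ε) (hεα : ε < α)
    {n : ℕ} (hn1 : 1 / ε < (n : ℝ)) (hn2 : 1 / (α - ε) < (n : ℝ))
    (P : Set (Fin n → Γ)) (S : Fin n → Γ) (hS : S ∈ P)
    (U : Fin n → Γ) (hU : α ≤ distSet U P)
    (q : ℕ) (μ : PMF (Strategy Γ n q)) (hμ : IsTest μ P ε) :
    α / (6 * ε) ≤ q := by
  have hεn : 1 < ε * n := by rwa [div_lt_iff₀' hε] at hn1
  have hαεn : 1 < (α - ε) * n := by rwa [div_lt_iff₀' (sub_pos.2 hεα)] at hn2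
  have hn : (0 : ℝ) < n := pos_of_mul_pos_right (one_pos.trans hεn) hε.le
  set V := Function.argminOn (hammingDist U) P ⟨S, hS⟩
  have hV : V ∈ P := Function.argminOn_mem _ _ _
  have hmin : ∀ Y ∈ P, hammingDist U V ≤ hammingDist U Y :=
    fun Y hY => Function.argminOn_le _ _ hY
  have hαD : α * n ≤ (diffSet U V).card := by
    rwa [distSet_eq_hdist_of_forall_le hV hmin, hdist_eq_hammingDist,
      hammingDist_eq_card_diffSet, le_div_iff₀ hn] at hU
  set l := ⌈ε * n⌉₊
  have hεl : ε * n ≤ l := Nat.le_ceil _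
  have hl : (l : ℝ) < ε * n + 1 := Nat.ceil_lt_add_one (by positivity)
  have hD : (diffSet U V).card ≤ 3 * q * l :=
    (hμ.isDistinguisher hV hmin ((le_div_iff₀ hn).2 hεl)).card_diffSet_le
      (by exact_mod_cast (by linarith : (0 : ℝ) < l))
      (by exact_mod_cast (by linarith : (l : ℝ) ≤ (diffSet U V).card))
  rw [div_le_iff₀ (by positivity)]
  refine le_of_mul_le_mul_right ?_ hn
  calc α * n ≤ (diffSet U V).card := hαD
    _ ≤ 3 * q * l := by exact_mod_cast hD
    _ ≤ 3 * q * (2 * (ε * n)) := by gcongr; linarith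
    _ = q * (6 * ε) * n := by ring

/-- **Corollary (straightforward statement).** If `P ⊆ Γ^n` contains some `S` and there
is `U` with `d(U,P) ≥ α`, where `0 < ε < α` and `n > 1/ε`, `n > 1/(α-ε)`, then every
adaptive randomized `q`-query `ε`-test for `P` satisfies `q ≥ α/(6ε)`. -/
theorem test_lower_bound_straightforward {Γ : Type*} [Fintype Γ] [Nonempty Γ]
    (α ε : ℝ) (hα : 0 < α) (hε : 0 < ε) (hεα : ε < α)
    {n : ℕ} (hn : 0 < n) (hn1 : 1 / ε < (n : ℝ)) (hn2 : 1 / (α - ε) < (n : ℝ))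
    (P : Set (Fin n → Γ)) (S : Fin n → Γ) (hS : S ∈ P)
    (U : Fin n → Γ) (hU : α ≤ distSet U P)
    (q : ℕ) (μ : PMF (Strategy Γ n q)) (hμ : IsTest μ P ε) :
    α / (6 * ε) ≤ q :=
  test_lower_bound_straightforward_general α ε hε hεα hn1 hn2 P S hS U hU q μ hμ
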